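/- Any two distinct coinitial backward transitions in the proved LTS for CCSK are concurrent: if t₁ : X ⇝[θ₁] X₁ and t₂ : X ⇝[θ₂] X₂ are different backward transitions from a reachable process X, then θ₁ ⌣ θ₂. -/

import Mathlib

namespace CCSK

/-- Labels: names, co-names, and the silent action τ. -/
inductive Lab : Type
  | name : ℕ → Lab
  | coname : ℕ → Lab
  | tau : Lab
deriving DecidableEq

/-- Complement of a label. -/
def Lab.co : Lab → Lab
  | .name n => .coname n
  | .coname n => .name n
  | .tau => .tau

abbrev Key := ℕ

/-- CCSK processes (with a replication operator for the extended calculus). -/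
inductive Proc : Type
  | nil : Proc
  | pre : Lab → Proc → Proc          -- α.X
  | kpre : Lab → Key → Proc → Proc   -- α[k].X
  | par : Proc → Proc → Proc
  | sum : Proc → Proc → Proc
  | res : Proc → ℕ → Proc            -- X \ a
  | repl : Proc → Proc               -- !X
deriving DecidableEq

/-- Keys occurring in a process. -/
def Proc.keys : Proc → Set Key
  | .nil => ∅
  | .pre _ X => X.keys
  | .kpre _ k X => insert k X.keys
  | .par X Y => X.keys ∪ Y.keys
  | .sum X Y => X.keys ∪ Y.keys
  | .res X _ => X.keys
  | .repl X => X.keys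

/-- A process is standard when it contains no keys. -/
def Proc.std (X : Proc) : Prop := X.keys = ∅

/-- Multiset of keyed-prefix occurrences (label, key). -/
def Proc.keyed : Proc → Multiset (Lab × Key)
  | .nil => 0
  | .pre _ X => X.keyed
  | .kpre a k X => (a, k) ::ₘ X.keyed
  | .par X Y => X.keyed + Y.keyed
  | .sum X Y => X.keyed + Y.keyed
  | .res X _ => X.keyed
  | .repl X => X.keyed

/-- Enhanced keyed labels. -/
inductive ELab : Type
  | base : Lab → Key → ELab          -- α[k]
  | parL : ELab → ELab               -- |_L θ
  | parR : ELab → ELab               -- |_R θ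
  | bang : ELab → ELab               -- !θ (replication)
  | syn : ELab → ELab → ELab         -- ⟨θ_L, θ_R⟩
deriving DecidableEq

/-- Underlying action label ℓ(θ). -/
def ELab.act : ELab → Lab
  | .base a _ => a
  | .parL θ => θ.act
  | .parR θ => θ.act
  | .bang θ => θ.act
  | .syn _ _ => .tau

/-- Key of an enhanced keyed label. -/
def ELab.key : ELab → Key
  | .base _ k => k
  | .parL θ => θ.key
  | .parR θ => θ.key
  | .bang θ => θ.key
  | .syn θ _ => θ.key

/-- Dependency relation ⋖ on enhanced keyed labels (including the extension
for replication labels). -/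
inductive Dep : ELab → ELab → Prop
  | base (a : Lab) (k : Key) (θ : ELab) : Dep (.base a k) θ
  | parL {θ θ'} : Dep θ θ' → Dep (.parL θ) (.parL θ')
  | parR {θ θ'} : Dep θ θ' → Dep (.parR θ) (.parR θ')
  | synSrcL {θL θR θ} : Dep θL θ → Dep (.syn θL θR) θ
  | synSrcR {θL θR θ} : Dep θR θ → Dep (.syn θL θR) θ
  | synTgtL {θ θL θR} : Dep θ θL → Dep θ (.syn θL θR)
  | synTgtR {θ θL θR} : Dep θ θR → Dep θ (.syn θL θR)
  | synSynL {θL θR θL' θR'} : Dep θL θL' → Dep (.syn θL θR) (.syn θL' θR')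
  | synSynR {θL θR θL' θR'} : Dep θR θR' → Dep (.syn θL θR) (.syn θL' θR')
  | bangBang (θ : ELab) : Dep (.bang θ) (.bang θ)
  | bangParL (θ θ' : ELab) : Dep (.bang θ) (.parL θ')
  | bangParRSynL (θL θR θ'' : ELab) : Dep (.bang (.syn θL θR)) (.parR (.parL θ''))
  | bangParRSynR (θL θR θ'' : ELab) : Dep (.bang (.syn θL θR)) (.parR (.parR θ''))
  | bangParR {θ θ' : ELab} : Dep θ θ' → Dep (.bang θ) (.parR θ')

/-- Concurrency of labels: no dependency in either direction. -/
def Conc (θ₁ θ₂ : ELab) : Prop := ¬ Dep θ₁ θ₂ ∧ ¬ Dep θ₂ θ₁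

/-- The proved forward LTS for CCSK (without replication rules). -/
inductive Fwd : Proc → ELab → Proc → Prop
  | act {a k X} : Proc.std X → Fwd (.pre a X) (.base a k) (.kpre a k X)
  | pre {a : Lab} {k : Key} {X X' : Proc} {θ : ELab} : Fwd X θ X' → θ.key ≠ k →
      Fwd (.kpre a k X) θ (.kpre a k X')
  | res {X X' : Proc} {θ : ELab} {a : ℕ} : Fwd X θ X' → θ.act ≠ .name a → θ.act ≠ .coname a →
      Fwd (X.res a) θ (X'.res a)
  | parL {X X' Y : Proc} {θ : ELab} : Fwd X θ X' → θ.key ∉ Y.keys →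
      Fwd (X.par Y) (.parL θ) (X'.par Y)
  | parR {Y Y' X : Proc} {θ : ELab} : Fwd Y θ Y' → θ.key ∉ X.keys →
      Fwd (X.par Y) (.parR θ) (X.par Y')
  | syn {X X' Y Y' : Proc} {θ₁ θ₂ : ELab} : Fwd X θ₁ X' → Fwd Y θ₂ Y' →
      θ₁.act ≠ .tau → θ₂.act = θ₁.act.co → θ₂.key = θ₁.key →
      Fwd (X.par Y) (.syn (.parL θ₁) (.parR θ₂)) (X'.par Y')
  | sumL {X θ X' Y} : Fwd X θ X' → Proc.std Y → Fwd (X.sum Y) θ (X'.sum Y)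
  | sumR {Y θ Y' X} : Fwd Y θ Y' → Proc.std X → Fwd (X.sum Y) θ (X.sum Y')

/-- The proved backward LTS for CCSK (exact symmetric of the forward one).
`Bwd X θ Y` means `X ⇝[θ] Y`. -/
inductive Bwd : Proc → ELab → Proc → Prop
  | act {a k X} : Proc.std X → Bwd (.kpre a k X) (.base a k) (.pre a X)
  | pre {a : Lab} {k : Key} {X' X : Proc} {θ : ELab} : Bwd X' θ X → θ.key ≠ k →
      Bwd (.kpre a k X') θ (.kpre a k X)
  | res {X' X : Proc} {θ : ELab} {a : ℕ} : Bwd X' θ X → θ.act ≠ .name a → θ.act ≠ .coname a →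
      Bwd (X'.res a) θ (X.res a)
  | parL {X' X Y : Proc} {θ : ELab} : Bwd X' θ X → θ.key ∉ Y.keys →
      Bwd (X'.par Y) (.parL θ) (X.par Y)
  | parR {Y' Y X : Proc} {θ : ELab} : Bwd Y' θ Y → θ.key ∉ X.keys →
      Bwd (X.par Y') (.parR θ) (X.par Y)
  | syn {X' X Y' Y : Proc} {θ₁ θ₂ : ELab} : Bwd X' θ₁ X → Bwd Y' θ₂ Y →
      θ₁.act ≠ .tau → θ₂.act = θ₁.act.co → θ₂.key = θ₁.key →
      Bwd (X'.par Y') (.syn (.parL θ₁) (.parR θ₂)) (X.par Y)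
  | sumL {X' θ X Y} : Bwd X' θ X → Proc.std Y → Bwd (X'.sum Y) θ (X.sum Y)
  | sumR {Y' θ Y X} : Bwd Y' θ Y → Proc.std X → Bwd (X.sum Y') θ (X.sum Y)

/-- Combined LTS: `Step true` is forward, `Step false` is backward. -/
def Step : Bool → Proc → ELab → Proc → Prop
  | true => Fwd
  | false => Bwd

/-- Reachability: connected to a standard process by forward/backward moves. -/
def Reachable (X : Proc) : Prop :=
  ∃ X₀ : Proc, X₀.std ∧
    Relation.ReflTransGen (fun A B => ∃ d θ, Step d A θ B) X₀ X

/-- The proved forward LTS for CCSK extended with replication. -/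
inductive FwdR : Proc → ELab → Proc → Prop
  | act {a k X} : Proc.std X → FwdR (.pre a X) (.base a k) (.kpre a k X)
  | pre {a : Lab} {k : Key} {X X' : Proc} {θ : ELab} : FwdR X θ X' → θ.key ≠ k →
      FwdR (.kpre a k X) θ (.kpre a k X')
  | res {X X' : Proc} {θ : ELab} {a : ℕ} : FwdR X θ X' → θ.act ≠ .name a → θ.act ≠ .coname a →
      FwdR (X.res a) θ (X'.res a)
  | parL {X X' Y : Proc} {θ : ELab} : FwdR X θ X' → θ.key ∉ Y.keys →
      FwdR (X.par Y) (.parL θ) (X'.par Y)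
  | parR {Y Y' X : Proc} {θ : ELab} : FwdR Y θ Y' → θ.key ∉ X.keys →
      FwdR (X.par Y) (.parR θ) (X.par Y')
  | syn {X X' Y Y' : Proc} {θ₁ θ₂ : ELab} : FwdR X θ₁ X' → FwdR Y θ₂ Y' →
      θ₁.act ≠ .tau → θ₂.act = θ₁.act.co → θ₂.key = θ₁.key →
      FwdR (X.par Y) (.syn (.parL θ₁) (.parR θ₂)) (X'.par Y')
  | sumL {X θ X' Y} : FwdR X θ X' → Proc.std Y → FwdR (X.sum Y) θ (X'.sum Y)
  | sumR {Y θ Y' X} : FwdR Y θ Y' → Proc.std X → FwdR (X.sum Y) θ (X.sum Y')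
  | repl1 {X X' : Proc} {θ : ELab} : FwdR X θ X' →
      FwdR (.repl X) (.bang θ) ((Proc.repl X).par X')
  | repl2 {X X' X'' : Proc} {θ₁ θ₂ : ELab} : FwdR X θ₁ X' → FwdR X θ₂ X'' →
      θ₁.act ≠ .tau → θ₂.act = θ₁.act.co → θ₂.key = θ₁.key →
      FwdR (.repl X) (.bang (.syn (.parL θ₁) (.parR θ₂)))
        ((Proc.repl X).par (X'.par X''))

/-- The proved backward LTS for CCSK extended with replication. -/
inductive BwdR : Proc → ELab → Proc → Prop
  | act {a k X} : Proc.std X → BwdR (.kpre a k X) (.base a k) (.pre a X)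
  | pre {a : Lab} {k : Key} {X' X : Proc} {θ : ELab} : BwdR X' θ X → θ.key ≠ k →
      BwdR (.kpre a k X') θ (.kpre a k X)
  | res {X' X : Proc} {θ : ELab} {a : ℕ} : BwdR X' θ X → θ.act ≠ .name a → θ.act ≠ .coname a →
      BwdR (X'.res a) θ (X.res a)
  | parL {X' X Y : Proc} {θ : ELab} : BwdR X' θ X → θ.key ∉ Y.keys →
      BwdR (X'.par Y) (.parL θ) (X.par Y)
  | parR {Y' Y X : Proc} {θ : ELab} : BwdR Y' θ Y → θ.key ∉ X.keys →
      BwdR (X.par Y') (.parR θ) (X.par Y)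
  | syn {X' X Y' Y : Proc} {θ₁ θ₂ : ELab} : BwdR X' θ₁ X → BwdR Y' θ₂ Y →
      θ₁.act ≠ .tau → θ₂.act = θ₁.act.co → θ₂.key = θ₁.key →
      BwdR (X'.par Y') (.syn (.parL θ₁) (.parR θ₂)) (X.par Y)
  | sumL {X' θ X Y} : BwdR X' θ X → Proc.std Y → BwdR (X'.sum Y) θ (X.sum Y)
  | sumR {Y' θ Y X} : BwdR Y' θ Y → Proc.std X → BwdR (X.sum Y') θ (X.sum Y)
  | repl1 {X' X : Proc} {θ : ELab} : BwdR X' θ X →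
      BwdR ((Proc.repl X).par X') (.bang θ) (.repl X)
  | repl2 {X' X'' X : Proc} {θ₁ θ₂ : ELab} : BwdR X' θ₁ X → BwdR X'' θ₂ X →
      θ₁.act ≠ .tau → θ₂.act = θ₁.act.co → θ₂.key = θ₁.key →
      BwdR ((Proc.repl X).par (X'.par X''))
        (.bang (.syn (.parL θ₁) (.parR θ₂))) (.repl X)

/-- Combined extended LTS. -/
def StepR : Bool → Proc → ELab → Proc → Prop
  | true => FwdR
  | false => BwdR

/-- Reachability in the extended calculus. -/
def ReachableR (X : Proc) : Prop :=
  ∃ X₀ : Proc, X₀.std ∧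
    Relation.ReflTransGen (fun A B => ∃ d θ, StepR d A θ B) X₀ X

/-- Traces: sequences of composable (forward or backward) transitions. -/
inductive Trace : Proc → Proc → Type
  | nil (X : Proc) : Trace X X
  | cons {X Y Z : Proc} (d : Bool) (θ : ELab) (s : Step d X θ Y)
      (T : Trace Y Z) : Trace X Z

/-- Composition of traces. -/
def Trace.comp : {X Y Z : Proc} → Trace X Y → Trace Y Z → Trace X Z
  | _, _, _, .nil _, U => U
  | _, _, _, .cons d θ s T, U => .cons d θ s (Trace.comp T U)

/-- Length of a trace. -/
def Trace.length : {X Y : Proc} → Trace X Y → ℕ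
  | _, _, .nil _ => 0
  | _, _, .cons _ _ _ T => Trace.length T + 1

/-- All transitions of a trace have direction `d`. -/
def Trace.AllDir (d : Bool) : {X Y : Proc} → Trace X Y → Prop
  | _, _, .nil _ => True
  | _, _, .cons d' _ _ T => d' = d ∧ Trace.AllDir d T

/-- Causal equivalence of traces: the least equivalence relation, closed under
composition, cancelling a transition followed by its reverse, and swapping the
two sides of a concurrency square. -/
inductive CEq : {X Y : Proc} → Trace X Y → Trace X Y → Prop
  | refl {X Y} (T : Trace X Y) : CEq T T
  | symm {X Y} {T T' : Trace X Y} : CEq T T' → CEq T' T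
  | trans {X Y} {T T' T'' : Trace X Y} : CEq T T' → CEq T' T'' → CEq T T''
  | congr {X Y Z : Proc} {d θ} (s : Step d X θ Y) {T T' : Trace Y Z} :
      CEq T T' → CEq (Trace.cons d θ s T) (Trace.cons d θ s T')
  | cancel {X Y Z : Proc} {d θ} (s : Step d X θ Y) (s' : Step (!d) Y θ X)
      (T : Trace X Z) :
      CEq (Trace.cons d θ s (Trace.cons (!d) θ s' T)) T
  | square {X X₁ X₂ Y Z : Proc} {d₁ d₂ θ₁ θ₂}
      (s₁ : Step d₁ X θ₁ X₁) (t₂ : Step d₂ X₁ θ₂ Y)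
      (s₂ : Step d₂ X θ₂ X₂) (t₁ : Step d₁ X₂ θ₁ Y)
      (hc : Conc θ₁ θ₂) (T : Trace Y Z) :
      CEq (Trace.cons d₁ θ₁ s₁ (Trace.cons d₂ θ₂ t₂ T))
          (Trace.cons d₂ θ₂ s₂ (Trace.cons d₁ θ₁ t₁ T))

/-- Removal of the keyed prefix α[k]. -/
def remP (a : Lab) (k : Key) : Proc → Proc
  | .nil => .nil
  | .pre b X => .pre b X
  | .kpre b m X => if b = a ∧ m = k then X else .kpre b m (remP a k X)
  | .par X Y => .par (remP a k X) (remP a k Y)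
  | .sum X Y => .sum (remP a k X) (remP a k Y)
  | .res X n => .res (remP a k X) n
  | .repl X => .repl (remP a k X)

/-- rem_k^α : remove α[k] and its complement (only α[k] when α = τ). -/
def remK (a : Lab) (k : Key) (X : Proc) : Proc :=
  if a = Lab.tau then remP a k X else remP a k (remP a.co k X)

/-- Left projection of enhanced keyed labels (partial). -/
def projL : ELab → Option ELab
  | .parL θ => some θ
  | .syn (.parL θL) _ => some θL
  | _ => none

/-- Right projection of enhanced keyed labels (partial). -/
def projR : ELab → Option ELab
  | .parR θ => some θ
  | .syn _ (.parR θR) => some θR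
  | _ => none

/-- Projection selector: `true` is left, `false` is right. -/
def eproj : Bool → ELab → Option ELab
  | true => projL
  | false => projR

/-- Component selector for parallel processes. -/
def side (b : Bool) (L R : Proc) : Proc := if b then L else R

/-- Labels of the shapes arising from a parallel composition. -/
def ParShape (θ : ELab) : Prop :=
  (∃ φ, θ = ELab.parL φ) ∨ (∃ φ, θ = ELab.parR φ) ∨
    ∃ φ ψ, θ = ELab.syn (ELab.parL φ) (ELab.parR ψ)

/-- The collapsing function σ identifying ! and |_R prefixes. -/
def collapse : ELab → ELab
  | .base a k => .base a k
  | .parL θ => .parL (collapse θ)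
  | .parR θ => .parR (collapse θ)
  | .bang θ => .parR (collapse θ)
  | .syn θ₁ θ₂ => .syn (collapse θ₁) (collapse θ₂)

/-- Sub-term relation: strips sums, restrictions and executed keyed prefixes.
`Strip X Y` means X is a sub-term of Y. -/
inductive Strip : Proc → Proc → Prop
  | refl (X : Proc) : Strip X X
  | sumL {X Y Z : Proc} : Strip X Y → Strip X (Y.sum Z)
  | sumR {X Y Z : Proc} : Strip X Y → Strip X (Z.sum Y)
  | res {X Y : Proc} {a : ℕ} : Strip X Y → Strip X (Y.res a)
  | kpre {X Y : Proc} {a : Lab} {k : Key} : Strip X Y → Strip X (.kpre a k Y)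

/-- A forward transition of the proved LTS, as an object. -/
structure FTrans where
  src : Proc
  lab : ELab
  tgt : Proc
  ok : Fwd src lab tgt

/-- A backward transition of the proved LTS, as an object. -/
structure BTrans where
  src : Proc
  lab : ELab
  tgt : Proc
  ok : Bwd src lab tgt

/-!
A backward transition of `X` undoes a keyed prefix `α[k]` of `X`, and its key `k` identifies it:
the side conditions of the parallel rules forbid the key of one component to occur in the other,
so two coinitial backward transitions with the same key coincide. Dependency between coinitial
backward transitions forces equal keys: the base clause `α[k] ⋖ θ` only applies to a process
`α[k].X` with `X` standard, which has no other backward transition, and every other clause of `⋖`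
relating labels of a parallel composition descends into matching components.
-/

namespace Dep

variable {θ θ' φ ψ φ' ψ' : ELab}

theorem of_parL_parL (h : Dep (.parL θ) (.parL θ')) : Dep θ θ' := by
  cases h with | parL h => exact h

theorem of_parR_parR (h : Dep (.parR θ) (.parR θ')) : Dep θ θ' := by
  cases h with | parR h => exact h

theorem not_parL_parR : ¬ Dep (.parL θ) (.parR θ') := nofun

theorem not_parR_parL : ¬ Dep (.parR θ) (.parL θ') := nofun

theorem of_parL_syn (h : Dep (.parL θ) (.syn (.parL φ) (.parR ψ))) : Dep θ φ := by
  cases h with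
  | synTgtL h => exact h.of_parL_parL
  | synTgtR h => exact absurd h not_parL_parR

theorem of_parR_syn (h : Dep (.parR θ) (.syn (.parL φ) (.parR ψ))) : Dep θ ψ := by
  cases h with
  | synTgtL h => exact absurd h not_parR_parL
  | synTgtR h => exact h.of_parR_parR

theorem of_syn_parL (h : Dep (.syn (.parL φ) (.parR ψ)) (.parL θ)) : Dep φ θ := by
  cases h with
  | synSrcL h => exact h.of_parL_parL
  | synSrcR h => exact absurd h not_parR_parL

theorem of_syn_parR (h : Dep (.syn (.parL φ) (.parR ψ)) (.parR θ)) : Dep ψ θ := by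
  cases h with
  | synSrcL h => exact absurd h not_parL_parR
  | synSrcR h => exact h.of_parR_parR

theorem of_syn_syn (h : Dep (.syn (.parL φ) (.parR ψ)) (.syn (.parL φ') (.parR ψ'))) :
    Dep φ φ' ∨ Dep ψ ψ' := by
  cases h with
  | synSrcL h => exact .inl h.of_parL_syn
  | synSrcR h => exact .inr h.of_parR_syn
  | synTgtL h => exact .inl h.of_syn_parL
  | synTgtR h => exact .inr h.of_syn_parR
  | synSynL h => exact .inl h.of_parL_parL
  | synSynR h => exact .inr h.of_parR_parR

end Dep

namespace Bwd

theorem key_mem_keys {X Y : Proc} {θ : ELab} (h : Bwd X θ Y) : θ.key ∈ X.keys := by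
  induction h with
  | act _ => exact Set.mem_insert _ _
  | pre _ _ ih => exact Set.mem_insert_of_mem _ ih
  | res _ _ _ ih => exact ih
  | parL _ _ ih | syn _ _ _ _ _ ih _ | sumL _ _ ih => exact Set.mem_union_left _ ih
  | parR _ _ ih | sumR _ _ ih => exact Set.mem_union_right _ ih

theorem not_of_std {X Y : Proc} {θ : ELab} (hX : X.std) : ¬ Bwd X θ Y := fun h =>
  Set.eq_empty_iff_forall_notMem.mp hX _ h.key_mem_keys

theorem key_eq_of_dep {X X₁ : Proc} {θ₁ : ELab} (h₁ : Bwd X θ₁ X₁) :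
    ∀ {θ₂ X₂}, Bwd X θ₂ X₂ → Dep θ₁ θ₂ → θ₁.key = θ₂.key := by
  induction h₁ with
  | act hstd =>
    intro θ₂ X₂ h₂ _
    cases h₂ with
    | act _ => rfl
    | pre h₂ _ => exact absurd h₂ (not_of_std hstd)
  | pre h₁ _ ih =>
    intro θ₂ X₂ h₂ hd
    cases h₂ with
    | act hstd => exact absurd h₁ (not_of_std hstd)
    | pre h₂ _ => exact ih h₂ hd
  | res _ _ _ ih =>
    intro θ₂ X₂ h₂ hd
    cases h₂ with
    | res h₂ _ _ => exact ih h₂ hd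
  | parL _ _ ih =>
    intro θ₂ X₂ h₂ hd
    cases h₂ with
    | parL h₂ _ => exact (ih h₂ hd.of_parL_parL :)
    | parR _ _ => exact absurd hd Dep.not_parL_parR
    | syn h₂ _ _ _ _ => exact (ih h₂ hd.of_parL_syn :)
  | parR _ _ ih =>
    intro θ₂ X₂ h₂ hd
    cases h₂ with
    | parL _ _ => exact absurd hd Dep.not_parR_parL
    | parR h₂ _ => exact (ih h₂ hd.of_parR_parR :)
    | syn _ h₂ _ _ hk => exact (ih h₂ hd.of_parR_syn).trans hk
  | syn _ _ _ _ hk ihL ihR =>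
    intro θ₂ X₂ h₂ hd
    cases h₂ with
    | parL h₂ _ => exact (ihL h₂ hd.of_syn_parL :)
    | parR h₂ _ => exact hk.symm.trans (ihR h₂ hd.of_syn_parR :)
    | syn h₂ h₂' _ _ hk₂ =>
      rcases hd.of_syn_syn with hd | hd
      · exact (ihL h₂ hd :)
      · exact hk.symm.trans ((ihR h₂' hd).trans hk₂)
  | sumL _ hstd ih =>
    intro θ₂ X₂ h₂ hd
    cases h₂ with
    | sumL h₂ _ => exact ih h₂ hd
    | sumR h₂ _ => exact absurd h₂ (not_of_std hstd)
  | sumR _ hstd ih =>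
    intro θ₂ X₂ h₂ hd
    cases h₂ with
    | sumL h₂ _ => exact absurd h₂ (not_of_std hstd)
    | sumR h₂ _ => exact ih h₂ hd

theorem eq_of_key_eq {X X₁ : Proc} {θ₁ : ELab} (h₁ : Bwd X θ₁ X₁) :
    ∀ {θ₂ X₂}, Bwd X θ₂ X₂ → θ₁.key = θ₂.key → θ₁ = θ₂ ∧ X₁ = X₂ := by
  induction h₁ with
  | act hstd =>
    intro θ₂ X₂ h₂ _
    cases h₂ with
    | act _ => exact ⟨rfl, rfl⟩
    | pre h₂ _ => exact absurd h₂ (not_of_std hstd)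
  | pre h₁ _ ih =>
    intro θ₂ X₂ h₂ hk
    cases h₂ with
    | act hstd => exact absurd h₁ (not_of_std hstd)
    | pre h₂ _ => obtain ⟨rfl, rfl⟩ := ih h₂ hk; exact ⟨rfl, rfl⟩
  | res _ _ _ ih =>
    intro θ₂ X₂ h₂ hk
    cases h₂ with
    | res h₂ _ _ => obtain ⟨rfl, rfl⟩ := ih h₂ hk; exact ⟨rfl, rfl⟩
  | parL _ hnY ih =>
    intro θ₂ X₂ h₂ hk
    cases h₂ with
    | parL h₂ _ => obtain ⟨rfl, rfl⟩ := ih h₂ hk; exact ⟨rfl, rfl⟩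
    | parR h₂ _ => exact absurd (hk ▸ h₂.key_mem_keys) hnY
    | syn _ h₂ _ _ hk₂ => exact absurd ((hk.trans hk₂.symm) ▸ h₂.key_mem_keys) hnY
  | parR _ hnX ih =>
    intro θ₂ X₂ h₂ hk
    cases h₂ with
    | parL h₂ _ => exact absurd (hk ▸ h₂.key_mem_keys) hnX
    | parR h₂ _ => obtain ⟨rfl, rfl⟩ := ih h₂ hk; exact ⟨rfl, rfl⟩
    | syn h₂ _ _ _ _ => exact absurd (hk ▸ h₂.key_mem_keys) hnX
  | syn hL hR _ _ hk ihL ihR =>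
    intro θ₂ X₂ h₂ hk₂
    cases h₂ with
    | parL _ hn => exact absurd (hk₂ ▸ hk ▸ hR.key_mem_keys) hn
    | parR _ hn => exact absurd (hk₂ ▸ hL.key_mem_keys) hn
    | syn h₂ h₂' _ _ hk₂' =>
      obtain ⟨rfl, rfl⟩ := ihL h₂ hk₂
      obtain ⟨rfl, rfl⟩ := ihR h₂' (hk.trans (hk₂.trans hk₂'.symm))
      exact ⟨rfl, rfl⟩
  | sumL _ hstd ih =>
    intro θ₂ X₂ h₂ hk
    cases h₂ with
    | sumL h₂ _ => obtain ⟨rfl, rfl⟩ := ih h₂ hk; exact ⟨rfl, rfl⟩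
    | sumR h₂ _ => exact absurd h₂ (not_of_std hstd)
  | sumR _ hstd ih =>
    intro θ₂ X₂ h₂ hk
    cases h₂ with
    | sumL h₂ _ => exact absurd h₂ (not_of_std hstd)
    | sumR h₂ _ => obtain ⟨rfl, rfl⟩ := ih h₂ hk; exact ⟨rfl, rfl⟩

theorem eq_of_dep {X X₁ X₂ : Proc} {θ₁ θ₂ : ELab} (h₁ : Bwd X θ₁ X₁) (h₂ : Bwd X θ₂ X₂)
    (hd : Dep θ₁ θ₂) : θ₁ = θ₂ ∧ X₁ = X₂ :=
  h₁.eq_of_key_eq h₂ (h₁.key_eq_of_dep h₂ hd)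

end Bwd

end CCSK

open CCSK in
/-- Any two distinct coinitial backward transitions are concurrent. -/
theorem backward_transitions_concurrent : ∀ (X X₁ X₂ : Proc) (θ₁ θ₂ : ELab),
    Reachable X → Bwd X θ₁ X₁ → Bwd X θ₂ X₂ →
    ¬ (θ₁ = θ₂ ∧ X₁ = X₂) → Conc θ₁ θ₂ := by
  intro X X₁ X₂ θ₁ θ₂ _ h₁ h₂ hne
  exact ⟨fun hd => hne (h₁.eq_of_dep h₂ hd),
    fun hd => hne ((h₂.eq_of_dep h₁ hd).imp Eq.symm Eq.symm)⟩
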